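/- For any two probability measures μ and ν on a common measurable space, the Jensen–Shannon divergence satisfies D_JS(μ, ν) ≥ (1/2) · D_TV(μ, ν)²; equivalently, D_TV(μ, ν) ≤ √(2 · D_JS(μ, ν)). -/

import Mathlib

/-!
Put `m = (μ + ν) / 2` and `f = dμ/dm`. Then `dν/dm = 2 - f`, so `f = 1 + s` with `|s| ≤ 1`, and
the integrand of `D_KL(μ, m) + D_KL(ν, m)` is `φ(1 + s) + φ(1 - s) ≥ s²`, where
`φ(t) = t log t + 1 - t`. Hence `D_JS(μ, ν) ≥ ½ ∫ s² dm ≥ ½ (∫ |s| dm)²`. On the other hand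
`∫ s dm = 0`, so for every measurable `A`,
`|μ(A) - ν(A)| = 2 |∫_A s dm| ≤ ∫_A |s| dm + ∫_Aᶜ |s| dm = ∫ |s| dm`.
-/

open MeasureTheory ProbabilityTheory
open scoped ENNReal

/-- The total variation distance `sup_A |μ(A) − ν(A)|` over measurable sets `A`. -/
noncomputable def tvDist {α : Type*} [MeasurableSpace α] (μ ν : Measure α) : ℝ :=
  ⨆ A : {s : Set α // MeasurableSet s}, |(μ ↑A).toReal - (ν ↑A).toReal|

/-- The Kullback–Leibler divergence `D_KL(μ, ν) = ∫ f(dμ/dν) dν` with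
`f(t) = t log t + 1 − t ≥ 0`, valued in `[0, ∞]`.  For probability measures with `μ ≪ ν`
this agrees with `∫ (dμ/dν) log(dμ/dν) dν`, since `∫ (1 − dμ/dν) dν = 0`. -/
noncomputable def klDiv {α : Type*} [MeasurableSpace α] (μ ν : Measure α) : ℝ≥0∞ :=
  ∫⁻ x, ENNReal.ofReal
    ((μ.rnDeriv ν x).toReal * Real.log (μ.rnDeriv ν x).toReal
      + 1 - (μ.rnDeriv ν x).toReal) ∂ν

/-- The Jensen–Shannon divergence
`D_JS(μ, ν) = (1/2) D_KL(μ, m) + (1/2) D_KL(ν, m)` with `m = (μ + ν)/2`. -/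
noncomputable def jsDiv {α : Type*} [MeasurableSpace α] (μ ν : Measure α) : ℝ≥0∞ :=
  2⁻¹ * klDiv μ ((2 : ENNReal)⁻¹ • (μ + ν)) + 2⁻¹ * klDiv ν ((2 : ENNReal)⁻¹ • (μ + ν))

open Real
open InformationTheory (klFun klFun_nonneg klFun_one hasDerivAt_klFun continuous_klFun)

lemma two_mul_le_log_one_add_sub_log_one_sub {s : ℝ} (h0 : 0 ≤ s) (h1 : s < 1) :
    2 * s ≤ log (1 + s) - log (1 - s) := by
  have := le_hasSum (hasSum_log_sub_log_of_abs_lt_one (abs_lt.2 ⟨by linarith, h1⟩)) 0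
    fun k _ ↦ by positivity
  simpa using this

lemma hasDerivAt_klFun_one_add_add_klFun_one_sub_sub_sq {x : ℝ} (hx : |x| < 1) :
    HasDerivAt (fun u ↦ klFun (1 + u) + klFun (1 - u) - u ^ 2)
      (log (1 + x) - log (1 - x) - 2 * x) x := by
  obtain ⟨h₁, h₂⟩ := abs_lt.1 hx
  have hp := (hasDerivAt_klFun (by linarith : 1 + x ≠ 0)).comp x ((hasDerivAt_id x).const_add 1)
  have hm := (hasDerivAt_klFun (by linarith : 1 - x ≠ 0)).comp x ((hasDerivAt_id x).const_sub 1)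
  exact ((hp.add hm).sub (hasDerivAt_pow 2 x)).congr_deriv (by push_cast; ring)

lemma sq_le_klFun_one_add_add_klFun_one_sub_of_nonneg {s : ℝ} (h0 : 0 ≤ s) (h1 : s ≤ 1) :
    s ^ 2 ≤ klFun (1 + s) + klFun (1 - s) := by
  have hmono : MonotoneOn (fun u ↦ klFun (1 + u) + klFun (1 - u) - u ^ 2) (Set.Icc 0 1) := by
    refine monotoneOn_of_hasDerivWithinAt_nonneg
      (f' := fun x ↦ log (1 + x) - log (1 - x) - 2 * x) (convex_Icc 0 1)
      (continuous_klFun.comp_continuousOn (by fun_prop) |>.add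
        (continuous_klFun.comp_continuousOn (by fun_prop)) |>.sub (by fun_prop))
      (fun x hx ↦ ?_) (fun x hx ↦ ?_)
    all_goals rw [interior_Icc] at hx
    · exact (hasDerivAt_klFun_one_add_add_klFun_one_sub_sub_sq
        (abs_lt.2 ⟨by linarith [hx.1], hx.2⟩)).hasDerivWithinAt
    · linarith [two_mul_le_log_one_add_sub_log_one_sub hx.1.le hx.2]
  have := hmono ⟨le_rfl, zero_le_one⟩ ⟨h0, h1⟩ h0
  simp only [add_zero, sub_zero, klFun_one] at this
  linarith

lemma sq_le_klFun_one_add_add_klFun_one_sub {s : ℝ} (hs : |s| ≤ 1) :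
    s ^ 2 ≤ klFun (1 + s) + klFun (1 - s) := by
  rcases le_total 0 s with h | h
  · exact sq_le_klFun_one_add_add_klFun_one_sub_of_nonneg h (abs_le.1 hs).2
  · have := sq_le_klFun_one_add_add_klFun_one_sub_of_nonneg (neg_nonneg.2 h)
      (by linarith [(abs_le.1 hs).1])
    rw [neg_sq, ← sub_eq_add_neg, sub_neg_eq_add] at this
    linarith

section

variable {α : Type*} [MeasurableSpace α]

lemma two_mul_abs_setIntegral_le_integral_abs {m : Measure α} {h : α → ℝ} (hint : Integrable h m)
    (hzero : ∫ x, h x ∂m = 0) {A : Set α} (hA : MeasurableSet A) :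
    2 * |∫ x in A, h x ∂m| ≤ ∫ x, |h x| ∂m := by
  have hcompl : ∫ x in Aᶜ, h x ∂m = -∫ x in A, h x ∂m := by
    linarith [integral_add_compl hA hint]
  calc 2 * |∫ x in A, h x ∂m| = |∫ x in A, h x ∂m| + |∫ x in Aᶜ, h x ∂m| := by
        rw [hcompl, abs_neg]; ring
    _ ≤ ∫ x in A, |h x| ∂m + ∫ x in Aᶜ, |h x| ∂m :=
        add_le_add abs_integral_le_integral_abs abs_integral_le_integral_abs
    _ = ∫ x, |h x| ∂m := integral_add_compl hA hint.abs

lemma sq_integral_abs_le_integral_sq {m : Measure α} [IsProbabilityMeasure m] {h : α → ℝ}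
    (hh : MemLp h 2 m) :
    (∫ x, |h x| ∂m) ^ 2 ≤ ∫ x, h x ^ 2 ∂m := by
  have := variance_eq_sub hh.abs ▸ variance_nonneg |h| m
  simpa [sq_abs] using this

noncomputable def midMeasure (μ ν : Measure α) : Measure α := (2 : ℝ≥0∞)⁻¹ • (μ + ν)

lemma two_smul_midMeasure (μ ν : Measure α) : (2 : ℝ≥0∞) • midMeasure μ ν = μ + ν := by
  rw [midMeasure, smul_smul, ENNReal.mul_inv_cancel two_ne_zero ENNReal.ofNat_ne_top, one_smul]

lemma jsDiv_eq (μ ν : Measure α) :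
    jsDiv μ ν = 2⁻¹ * (klDiv μ (midMeasure μ ν) + klDiv ν (midMeasure μ ν)) :=
  (mul_add _ _ _).symm

lemma klDiv_eq_lintegral_klFun (μ ν : Measure α) :
    klDiv μ ν = ∫⁻ x, ENNReal.ofReal (klFun (μ.rnDeriv ν x).toReal) ∂ν := rfl

lemma absolutelyContinuous_midMeasure_left (μ ν : Measure α) : μ ≪ midMeasure μ ν :=
  (Measure.AbsolutelyContinuous.add_right .rfl ν).trans
    (Measure.absolutelyContinuous_smul (ENNReal.inv_ne_zero.2 ENNReal.ofNat_ne_top))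

section Probability

variable (μ ν : Measure α) [IsProbabilityMeasure μ] [IsProbabilityMeasure ν]

instance isProbabilityMeasure_midMeasure : IsProbabilityMeasure (midMeasure μ ν) := by
  constructor
  simp [midMeasure, ← two_mul, ENNReal.mul_inv_cancel]

lemma toReal_midMeasure_apply (A : Set α) :
    (midMeasure μ ν A).toReal = 2⁻¹ * ((μ A).toReal + (ν A).toReal) := by
  rw [midMeasure, Measure.smul_apply, Measure.add_apply, smul_eq_mul, ENNReal.toReal_mul,
    ENNReal.toReal_add (measure_ne_top μ A) (measure_ne_top ν A), ENNReal.toReal_inv,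
    ENNReal.toReal_ofNat]

lemma ae_toReal_rnDeriv_midMeasure_add :
    ∀ᵐ x ∂midMeasure μ ν,
      (μ.rnDeriv (midMeasure μ ν) x).toReal + (ν.rnDeriv (midMeasure μ ν) x).toReal = 2 := by
  set m := midMeasure μ ν
  have hsmul := Measure.rnDeriv_smul_left_of_ne_top m m (r := 2) ENNReal.ofNat_ne_top
  rw [two_smul_midMeasure] at hsmul
  filter_upwards [Measure.rnDeriv_add μ ν m, hsmul, Measure.rnDeriv_self m,
    Measure.rnDeriv_lt_top μ m, Measure.rnDeriv_lt_top ν m] with x hadd h2 h1 hμ hν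
  rw [← ENNReal.toReal_add hμ.ne hν.ne, ← Pi.add_apply, ← hadd, h2]
  simp [h1]

lemma abs_toReal_sub_toReal_le_integral_abs_rnDeriv_midMeasure_sub_one {A : Set α}
    (hA : MeasurableSet A) :
    |(μ A).toReal - (ν A).toReal|
      ≤ ∫ x, |(μ.rnDeriv (midMeasure μ ν) x).toReal - 1| ∂midMeasure μ ν := by
  set m := midMeasure μ ν
  have hint : Integrable (fun x ↦ (μ.rnDeriv m x).toReal - 1) m :=
    Measure.integrable_toReal_rnDeriv.sub (integrable_const 1)
  have hzero : ∫ x, ((μ.rnDeriv m x).toReal - 1) ∂m = 0 := by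
    rw [integral_sub Measure.integrable_toReal_rnDeriv (integrable_const 1),
      Measure.integral_toReal_rnDeriv (absolutelyContinuous_midMeasure_left μ ν)]
    simp
  have hA' : ∫ x in A, ((μ.rnDeriv m x).toReal - 1) ∂m = (μ A).toReal - (m A).toReal := by
    rw [integral_sub Measure.integrable_toReal_rnDeriv.integrableOn (integrable_const 1),
      Measure.setIntegral_toReal_rnDeriv (absolutelyContinuous_midMeasure_left μ ν)]
    simp [measureReal_def]
  have := two_mul_abs_setIntegral_le_integral_abs hint hzero hA
  rw [hA', toReal_midMeasure_apply] at this
  calc |(μ A).toReal - (ν A).toReal|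
      = 2 * |(μ A).toReal - 2⁻¹ * ((μ A).toReal + (ν A).toReal)| := by
        rw [← abs_two, ← abs_mul]; ring_nf
    _ ≤ _ := this

lemma ae_abs_toReal_rnDeriv_midMeasure_sub_one_le :
    ∀ᵐ x ∂midMeasure μ ν, |(μ.rnDeriv (midMeasure μ ν) x).toReal - 1| ≤ 1 := by
  filter_upwards [ae_toReal_rnDeriv_midMeasure_add μ ν] with x hx
  have hμ : 0 ≤ (μ.rnDeriv (midMeasure μ ν) x).toReal := ENNReal.toReal_nonneg
  have hν : 0 ≤ (ν.rnDeriv (midMeasure μ ν) x).toReal := ENNReal.toReal_nonneg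
  exact abs_le.2 ⟨by linarith, by linarith⟩

lemma memLp_toReal_rnDeriv_midMeasure_sub_one :
    MemLp (fun x ↦ (μ.rnDeriv (midMeasure μ ν) x).toReal - 1) 2 (midMeasure μ ν) :=
  .of_bound ((Measure.measurable_rnDeriv _ _).ennreal_toReal.sub_const 1).aestronglyMeasurable 1
    (ae_abs_toReal_rnDeriv_midMeasure_sub_one_le μ ν)

lemma tvDist_le_integral_abs_rnDeriv_midMeasure_sub_one :
    tvDist μ ν ≤ ∫ x, |(μ.rnDeriv (midMeasure μ ν) x).toReal - 1| ∂midMeasure μ ν :=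
  ciSup_le fun A ↦ abs_toReal_sub_toReal_le_integral_abs_rnDeriv_midMeasure_sub_one μ ν A.2

lemma ofReal_integral_sq_le_klDiv_add :
    ENNReal.ofReal (∫ x, ((μ.rnDeriv (midMeasure μ ν) x).toReal - 1) ^ 2 ∂midMeasure μ ν)
      ≤ klDiv μ (midMeasure μ ν) + klDiv ν (midMeasure μ ν) := by
  rw [klDiv_eq_lintegral_klFun, klDiv_eq_lintegral_klFun,
    ← lintegral_add_left (by fun_prop),
    ofReal_integral_eq_lintegral_ofReal
      (memLp_toReal_rnDeriv_midMeasure_sub_one μ ν).integrable_sq (.of_forall fun _ ↦ sq_nonneg _)]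
  refine lintegral_mono_ae ?_
  filter_upwards [ae_toReal_rnDeriv_midMeasure_add μ ν,
    ae_abs_toReal_rnDeriv_midMeasure_sub_one_le μ ν] with x hsum habs
  rw [← ENNReal.ofReal_add (klFun_nonneg ENNReal.toReal_nonneg)
    (klFun_nonneg ENNReal.toReal_nonneg)]
  refine ENNReal.ofReal_le_ofReal ?_
  convert sq_le_klFun_one_add_add_klFun_one_sub habs using 3 <;> linarith

lemma ofReal_half_integral_sq_le_jsDiv :
    ENNReal.ofReal (2⁻¹ * ∫ x, ((μ.rnDeriv (midMeasure μ ν) x).toReal - 1) ^ 2 ∂midMeasure μ ν)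
      ≤ jsDiv μ ν := by
  rw [jsDiv_eq, ENNReal.ofReal_mul (by norm_num), ENNReal.ofReal_inv_of_pos two_pos,
    ENNReal.ofReal_ofNat]
  gcongr
  exact ofReal_integral_sq_le_klDiv_add μ ν

end Probability

end

lemma ENNReal.ofReal_le_rpow_two_inv_of_ofReal_half_mul_sq_le {t : ℝ} {e : ℝ≥0∞}
    (h : ENNReal.ofReal (2⁻¹ * t ^ 2) ≤ e) : ENNReal.ofReal t ≤ (2 * e) ^ (2⁻¹ : ℝ) := by
  rcases le_or_gt t 0 with ht | ht
  · simp [ENNReal.ofReal_of_nonpos ht]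
  have hsq : ENNReal.ofReal t ^ 2 ≤ 2 * e := by
    calc ENNReal.ofReal t ^ 2 = 2 * ENNReal.ofReal (2⁻¹ * t ^ 2) := by
          rw [← ENNReal.ofReal_pow ht.le, ← ENNReal.ofReal_ofNat 2,
            ← ENNReal.ofReal_mul zero_le_two]
          ring_nf
      _ ≤ 2 * e := by gcongr
  calc ENNReal.ofReal t = (ENNReal.ofReal t ^ 2) ^ (2⁻¹ : ℝ) := by
        simpa using (ENNReal.pow_rpow_inv_natCast two_ne_zero (ENNReal.ofReal t)).symm
    _ ≤ (2 * e) ^ (2⁻¹ : ℝ) := by gcongr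

/-- for any two probability measures,
`D_JS(μ,ν) ≥ (1/2) D_TV(μ,ν)²`; equivalently, `D_TV(μ,ν) ≤ √(2 D_JS(μ,ν))`. -/
theorem stmt9 {α : Type*} [MeasurableSpace α] (μ ν : Measure α)
    [IsProbabilityMeasure μ] [IsProbabilityMeasure ν] :
    ENNReal.ofReal (2⁻¹ * tvDist μ ν ^ 2) ≤ jsDiv μ ν ∧
    ENNReal.ofReal (tvDist μ ν) ≤ (2 * jsDiv μ ν) ^ ((2 : ℝ)⁻¹) := by
  have hTV :
      tvDist μ ν ^ 2 ≤ ∫ x, ((μ.rnDeriv (midMeasure μ ν) x).toReal - 1) ^ 2 ∂midMeasure μ ν :=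
    calc tvDist μ ν ^ 2
        ≤ (∫ x, |(μ.rnDeriv (midMeasure μ ν) x).toReal - 1| ∂midMeasure μ ν) ^ 2 := by
          gcongr
          · exact Real.iSup_nonneg fun _ ↦ abs_nonneg _
          · exact tvDist_le_integral_abs_rnDeriv_midMeasure_sub_one μ ν
      _ ≤ _ := sq_integral_abs_le_integral_sq (memLp_toReal_rnDeriv_midMeasure_sub_one μ ν)
  have hJS : ENNReal.ofReal (2⁻¹ * tvDist μ ν ^ 2) ≤ jsDiv μ ν :=
    (ENNReal.ofReal_le_ofReal (by gcongr)).trans (ofReal_half_integral_sq_le_jsDiv μ ν)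
  exact ⟨hJS, ENNReal.ofReal_le_rpow_two_inv_of_ofReal_half_mul_sq_le hJS⟩
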